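/- For a nonzero algebraic number α, the absolute logarithmic Weil height satisfies h(α) = 0 if and only if α is a root of unity (Kronecker's theorem). -/

import Mathlib

open NumberField IntermediateField

theorem IsOfFinOrder.isIntegral {R A : Type*} [CommRing R] [Ring A] [Algebra R A] {x : A}
    (hx : IsOfFinOrder x) : IsIntegral R x := by
  obtain ⟨m, hm, hxm⟩ := isOfFinOrder_iff_pow_eq_one.1 hx
  exact IsIntegral.of_pow hm (hxm ▸ isIntegral_one)

/-- Every complex embedding of the number field `ℚ⟮α⟯` extends to `L`, so the bound on the
conjugates of `α` descends to `ℚ⟮α⟯`, where Kronecker's theorem for number fields applies. -/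
theorem exists_pow_eq_one_of_isIntegral_of_norm_le_one {L : Type*} [Field L] [CharZero L]
    [Algebra.IsAlgebraic ℚ L] {α : L} (hα : α ≠ 0) (hint : IsIntegral ℤ α)
    (hle : ∀ φ : L →+* ℂ, ‖φ α‖ ≤ 1) : ∃ m : ℕ, 0 < m ∧ α ^ m = 1 := by
  have : FiniteDimensional ℚ ℚ⟮α⟯ := adjoin.finiteDimensional (Algebra.IsIntegral.isIntegral α)
  let K := ℚ⟮α⟯
  have : NumberField K := ⟨⟩
  let x := AdjoinSimple.gen ℚ α
  have hxα : algebraMap K L x = α := rfl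
  have hx0 : x ≠ 0 := fun h ↦ hα (by rw [← hxα, h, map_zero])
  have hxint : IsIntegral ℤ x := by
    rwa [← isIntegral_algebraMap_iff (algebraMap K L).injective, hxα]
  have hxle (ψ : K →+* ℂ) : ‖ψ x‖ ≤ 1 := by
    rw [← ComplexEmbedding.lift_algebraMap_apply L ψ x, hxα]
    exact hle _
  obtain ⟨m, hm, hxm⟩ := Embeddings.pow_eq_one_of_norm_le_one K ℂ hx0 hxint hxle
  exact ⟨m, hm, by rw [← hxα, ← map_pow, hxm, map_one]⟩

/-- Kronecker's theorem. Since the Weil height is not available in Mathlib, the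
condition `h(α) = 0` is expressed by its standard characterization: `α` is an
algebraic integer all of whose complex embeddings have absolute value at most `1`.
For a nonzero algebraic number `α`, this holds if and only if `α` is a root of unity. -/
theorem stmt_8 (α : AlgebraicClosure ℚ) (hα : α ≠ 0) :
    (IsIntegral ℤ α ∧ ∀ φ : AlgebraicClosure ℚ →+* ℂ, ‖φ α‖ ≤ 1) ↔
      ∃ m : ℕ, 0 < m ∧ α ^ m = 1 := by
  -- `Algebra ℚ (AlgebraicClosure ℚ)` is found as `DivisionRing.toRatAlgebra`, for which instance
  -- search does not see `AlgebraicClosure.isAlgebraic`.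
  have : Algebra.IsAlgebraic ℚ (AlgebraicClosure ℚ) := AlgebraicClosure.isAlgebraic ℚ
  refine ⟨fun ⟨hint, hle⟩ ↦ exists_pow_eq_one_of_isIntegral_of_norm_le_one hα hint hle,
    fun h ↦ ?_⟩
  have hfin : IsOfFinOrder α := isOfFinOrder_iff_pow_eq_one.2 h
  exact ⟨hfin.isIntegral, fun φ ↦ ((φ : AlgebraicClosure ℚ →* ℂ).isOfFinOrder hfin).norm_eq_one.le⟩
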